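/- Let p be prime, m a positive integer. The number of partitions of Z/p^m Z that are fixed by all translations is congruent to B_{p^m} modulo p. -/

import Mathlib

/-- Stirling numbers of the second kind. -/
def stirling : ℕ → ℕ → ℕ
  | 0, 0 => 1
  | 0, _ + 1 => 0
  | _ + 1, 0 => 0
  | n + 1, k + 1 => stirling n k + (k + 1) * stirling n (k + 1)

/-- The `n`-th Bell number. -/
def bell (n : ℕ) : ℕ := ∑ k ∈ Finset.range (n + 1), stirling n k

/-!
The equivalence relation of a partition of an abelian group that is fixed by all translations is
a congruence, so such partitions are the coset partitions of subgroups; the cyclic group `ℤ/p^mℤ`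
has one subgroup for each divisor of `p^m`, that is `m + 1` of them.

For the Bell numbers, let `L` be the linear functional on `𝔽_p[X]` that is `1` on every falling
factorial `(X)_k`; expanding `X^n` in falling factorials gives `L (X^n) = B_n`. In characteristic
`p` the falling factorial `(X)_p = X^p - X` is invariant under `X ↦ X - k`, hence
`(X)_k (X)_p = (X)_{k+p}` and `L` vanishes on the ideal generated by `X^p - X - 1` (Touchard's
congruence). Frobenius gives `X^(p^m) ≡ X + m` modulo that ideal, so
`B_{p^m} = L (X^(p^m)) = L (X) + m L (1) = m + 1` in `𝔽_p`.
-/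

open Polynomial Finset

def translationInvariantPartitions (G : Type*) [Add G] : Set (Set (Set G)) :=
  {P | Setoid.IsPartition P ∧ ∀ y : G, ∀ A ∈ P, (fun x => x + y) '' A ∈ P}

section TranslationInvariantPartitions

variable {G : Type*}

theorem AddCon.image_add_right_mem_classes [AddGroup G] (c : AddCon G) {A : Set G}
    (hA : A ∈ c.toSetoid.classes) (y : G) : (· + y) '' A ∈ c.toSetoid.classes := by
  obtain ⟨a, rfl⟩ := hA
  refine ⟨a + y, Set.ext fun z => ⟨?_, fun hz => ⟨z + -y, ?_, by simp⟩⟩⟩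
  · rintro ⟨x, hx, rfl⟩
    exact c.add hx (c.refl y)
  · simpa using c.add hz (c.refl (-y))

theorem Setoid.IsPartition.exists_addCon_classes_eq [AddCommGroup G] {P : Set (Set G)}
    (hP : Setoid.IsPartition P) (hinv : ∀ y : G, ∀ A ∈ P, (· + y) '' A ∈ P) :
    ∃ c : AddCon G, c.toSetoid.classes = P := by
  set r := Setoid.mkClasses P hP.2
  have add_right : ∀ {a b} (y : G), r a b → r (a + y) (b + y) := by
    intro a b y hab s hs hay
    obtain ⟨A, ⟨hA, haA⟩, -⟩ := hP.2 a
    have hs_eq : s = (· + y) '' A :=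
      Setoid.eq_of_mem_eqv_class hP.2 hs hay (hinv y A hA) ⟨a, haA, rfl⟩
    exact hs_eq ▸ ⟨b, hab A hA haA, rfl⟩
  refine ⟨⟨r, fun {a b c d} hab hcd => r.trans (add_right c hab) ?_⟩,
    Setoid.classes_mkClasses P hP⟩
  simpa only [add_comm b] using add_right b hcd

theorem translationInvariantPartitions_eq_range_addCon [AddCommGroup G] :
    translationInvariantPartitions G = Set.range fun c : AddCon G => c.toSetoid.classes := by
  ext P
  constructor
  · rintro ⟨hP, hinv⟩
    exact hP.exists_addCon_classes_eq hinv
  · rintro ⟨c, rfl⟩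
    exact ⟨c.toSetoid.isPartition_classes, fun y A hA => c.image_add_right_mem_classes hA y⟩

theorem ncard_translationInvariantPartitions [AddCommGroup G] :
    (translationInvariantPartitions G).ncard = Nat.card (AddSubgroup G) := by
  rw [translationInvariantPartitions_eq_range_addCon,
    Set.ncard_range_of_injective fun c d h => AddCon.toSetoid_inj.1 (Setoid.classes_inj.2 h)]
  exact (Nat.card_congr AddSubgroup.orderIsoAddCon.toEquiv).symm.trans
    (Nat.card_congr (Equiv.subtypeUnivEquiv fun H => AddSubgroup.normal_of_isAddCommutative H))

end TranslationInvariantPartitions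

section CyclicGroup

variable {G : Type*} [AddCommGroup G] [IsAddCyclic G] [Finite G]

theorem IsAddCyclic.range_nsmul_index_eq (H : AddSubgroup G) :
    (nsmulAddMonoidHom H.index : G →+ G).range = H := by
  refine AddSubgroup.eq_of_le_of_card_ge ?_ ?_
  · rintro _ ⟨g, rfl⟩
    exact H.nsmul_index_mem g
  · rw [IsAddCyclic.card_nsmulAddMonoidHom_range, Nat.gcd_eq_right H.index_dvd_card,
      ← H.card_mul_index, Nat.mul_div_cancel _ (Nat.pos_of_ne_zero H.index_ne_zero_of_finite)]

theorem IsAddCyclic.index_range_nsmul {d : ℕ} (hd : d ∣ Nat.card G) :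
    (nsmulAddMonoidHom d : G →+ G).range.index = d := by
  rw [IsAddCyclic.index_nsmulAddMonoidHom_range, Nat.gcd_eq_right hd]

theorem IsAddCyclic.card_addSubgroup :
    Nat.card (AddSubgroup G) = (Nat.card G).divisors.card := by
  let e : AddSubgroup G ≃ (Nat.card G).divisors :=
    { toFun H := ⟨H.index, Nat.mem_divisors.2 ⟨H.index_dvd_card, Nat.card_pos.ne'⟩⟩
      invFun d := (nsmulAddMonoidHom d.1 : G →+ G).range
      left_inv H := IsAddCyclic.range_nsmul_index_eq H
      right_inv d := Subtype.ext <| IsAddCyclic.index_range_nsmul (Nat.dvd_of_mem_divisors d.2) }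
  rw [Nat.card_congr e, Nat.card_eq_fintype_card, Fintype.card_coe]

end CyclicGroup

theorem card_addSubgroup_zmod_prime_pow {p : ℕ} [Fact p.Prime] (m : ℕ) :
    Nat.card (AddSubgroup (ZMod (p ^ m))) = m + 1 := by
  rw [IsAddCyclic.card_addSubgroup, Nat.card_zmod, Nat.divisors_prime_pow Fact.out,
    Finset.card_map, Finset.card_range]

theorem stirling_eq_stirlingSecond : ∀ n k, stirling n k = Nat.stirlingSecond n k
  | 0, 0 | 0, _ + 1 | _ + 1, 0 => rfl
  | n + 1, k + 1 => by
    rw [stirling, Nat.stirlingSecond_succ_succ, stirling_eq_stirlingSecond n k,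
      stirling_eq_stirlingSecond n (k + 1), add_comm]

section FallingFactorial

variable (R : Type*) [CommRing R]

theorem X_mul_descPochhammer (k : ℕ) :
    X * descPochhammer R k = descPochhammer R (k + 1) + k • descPochhammer R k := by
  rw [descPochhammer_succ_right, nsmul_eq_mul]
  ring

theorem X_pow_eq_sum_stirlingSecond_smul_descPochhammer (n : ℕ) :
    (X : R[X]) ^ n = ∑ k ∈ range (n + 1), n.stirlingSecond k • descPochhammer R k := by
  induction n with
  | zero => simp
  | succ n ih =>
    set g : ℕ → R[X] := fun k => (k * n.stirlingSecond k) • descPochhammer R k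
    have shift : ∑ k ∈ range (n + 1), g (k + 1) = ∑ k ∈ range (n + 1), g k := by
      have := (sum_range_succ' g (n + 1)).symm.trans (sum_range_succ g (n + 1))
      simpa [g, Nat.stirlingSecond_eq_zero_of_lt n.lt_succ_self] using this
    rw [sum_range_succ', pow_succ', ih, mul_sum]
    simp only [Nat.stirlingSecond_succ_succ, Nat.stirlingSecond_succ_zero, zero_smul, add_zero,
      add_smul, sum_add_distrib, mul_smul_comm, X_mul_descPochhammer, smul_add]
    rw [add_comm, shift]
    congr 1
    exact sum_congr rfl fun k _ => by rw [smul_smul, mul_comm]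

end FallingFactorial

section CharP

variable {R : Type*} [CommRing R] {p : ℕ} [CharP R p]

theorem descPochhammer_char_comp_X_sub_natCast (hp : p ≠ 0) (k : ℕ) :
    (descPochhammer R p).comp (X - (k : R[X])) = descPochhammer R p := by
  obtain ⟨n, rfl⟩ := Nat.exists_eq_add_one_of_ne_zero hp
  induction k with
  | zero => simp
  | succ k ih =>
    have hshift : X - ((k + 1 : ℕ) : R[X]) = (X - (k : R[X])).comp (X - 1) := by
      simp only [sub_comp, X_comp, natCast_comp, Nat.cast_succ]
      ring
    have hchar : ((n : R[X]) + 1) = 0 := by exact_mod_cast CharP.cast_eq_zero R[X] (n + 1)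
    rw [hshift, ← comp_assoc, ih, descPochhammer_succ_comp_X_sub_one, hchar, zero_smul, sub_zero]

theorem descPochhammer_mul_descPochhammer_char (hp : p ≠ 0) (k : ℕ) :
    descPochhammer R k * descPochhammer R p = descPochhammer R (k + p) := by
  rw [← descPochhammer_mul, descPochhammer_char_comp_X_sub_natCast hp]

theorem sub_sub_one_dvd_pow_char_pow_sub [Fact p.Prime] (x : R) (m : ℕ) :
    x ^ p - x - 1 ∣ x ^ p ^ m - x - m := by
  induction m with
  | zero => simp
  | succ m ih =>
    have hfrob : (x ^ p ^ m - x - m) ^ p = x ^ p ^ (m + 1) - x ^ p - m := by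
      have hm : (m : R) ^ p = m := by rw [← frobenius_def, map_natCast]
      rw [sub_pow_char, sub_pow_char, ← pow_mul, ← pow_succ, hm]
    have hsplit : x ^ p ^ (m + 1) - x - ((m + 1 : ℕ) : R) =
        (x ^ p ^ m - x - m) ^ p + (x ^ p - x - 1) := by
      rw [hfrob]
      push_cast
      ring
    rw [hsplit]
    exact dvd_add (dvd_pow ih (Fact.out : p.Prime).ne_zero) dvd_rfl

end CharP

section BellFunctional

variable (R : Type*) [CommRing R] [IsDomain R]

noncomputable def descPochhammerBasis : Module.Basis ℕ R R[X] :=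
  Polynomial.Sequence.basis
    ⟨descPochhammer R, fun k => by
      rw [degree_eq_natDegree (monic_descPochhammer R k).ne_zero, descPochhammer_natDegree]⟩
    fun k => by simp [(monic_descPochhammer R k).leadingCoeff]

theorem descPochhammerBasis_apply (k : ℕ) : descPochhammerBasis R k = descPochhammer R k :=
  Polynomial.Sequence.basis_eq_self _ _ k

noncomputable def bellFunctional : R[X] →ₗ[R] R :=
  (descPochhammerBasis R).constr R fun _ => 1

theorem bellFunctional_descPochhammer (k : ℕ) : bellFunctional R (descPochhammer R k) = 1 := by
  rw [← descPochhammerBasis_apply]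
  exact (descPochhammerBasis R).constr_basis R _ k

theorem bellFunctional_X_pow (n : ℕ) : bellFunctional R (X ^ n) = bell n := by
  rw [X_pow_eq_sum_stirlingSecond_smul_descPochhammer, map_sum, bell]
  simp only [map_nsmul, bellFunctional_descPochhammer, nsmul_one, stirling_eq_stirlingSecond,
    Nat.cast_sum]

theorem bellFunctional_mul_descPochhammer_char {p : ℕ} [CharP R p] (hp : p ≠ 0)
    (q : R[X]) :
    bellFunctional R (q * descPochhammer R p) = bellFunctional R q := by
  have hext : bellFunctional R ∘ₗ LinearMap.mulRight R (descPochhammer R p) = bellFunctional R :=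
    (descPochhammerBasis R).ext fun k => by
      simp only [LinearMap.comp_apply, LinearMap.mulRight_apply, descPochhammerBasis_apply,
        descPochhammer_mul_descPochhammer_char hp, bellFunctional_descPochhammer]
  exact LinearMap.congr_fun hext q

end BellFunctional

theorem descPochhammer_zmod_eq_X_pow_sub_X (p : ℕ) [Fact p.Prime] :
    descPochhammer (ZMod p) p = X ^ p - X := by
  have hp : 1 < p := (Fact.out : p.Prime).one_lt
  have hfalling := monic_descPochhammer (ZMod p) p
  have hmonic : (X ^ p - X : (ZMod p)[X]).Monic :=
    monic_X_pow_sub (by rw [degree_X]; exact_mod_cast hp)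
  have hdeg : (descPochhammer (ZMod p) p).degree = p := by
    rw [degree_eq_natDegree hfalling.ne_zero, descPochhammer_natDegree]
  refine eq_of_degree_sub_lt_of_eval_finset_eq univ ?_ fun a _ => ?_
  · rw [card_univ, ZMod.card, ← hdeg]
    refine degree_sub_lt_left ?_ hfalling.ne_zero
      (by rw [hfalling.leadingCoeff, hmonic.leadingCoeff])
    rw [hdeg, degree_eq_natDegree hmonic.ne_zero,
      FiniteField.X_pow_card_sub_X_natDegree_eq _ hp]
  · rw [descPochhammer_eval_eq_prod_range, eval_sub, eval_pow, eval_X, ZMod.pow_card, sub_self]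
    exact prod_eq_zero (mem_range.2 a.val_lt) (by rw [ZMod.natCast_zmod_val, sub_self])

theorem bellFunctional_X_pow_sub_X_sub_one_mul (p : ℕ) [Fact p.Prime] (q : (ZMod p)[X]) :
    bellFunctional (ZMod p) ((X ^ p - X - 1) * q) = 0 := by
  have h := bellFunctional_mul_descPochhammer_char (ZMod p) (Fact.out : p.Prime).ne_zero q
  rw [descPochhammer_zmod_eq_X_pow_sub_X] at h
  rw [show (X ^ p - X - 1) * q = q * (X ^ p - X) - q by ring, map_sub, h, sub_self]

theorem bell_prime_pow_modEq {p : ℕ} (hp : p.Prime) (m : ℕ) : bell (p ^ m) ≡ m + 1 [MOD p] := by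
  have := Fact.mk hp
  rw [← ZMod.natCast_eq_natCast_iff, ← bellFunctional_X_pow]
  obtain ⟨q, hq⟩ := sub_sub_one_dvd_pow_char_pow_sub (X : (ZMod p)[X]) m
  have hX : (X : (ZMod p)[X]) ^ p ^ m =
      descPochhammer _ 1 + m • descPochhammer _ 0 + (X ^ p - X - 1) * q := by
    rw [← hq, descPochhammer_one, descPochhammer_zero, nsmul_one]
    ring
  rw [hX, map_add, map_add, map_nsmul, bellFunctional_descPochhammer,
    bellFunctional_descPochhammer, bellFunctional_X_pow_sub_X_sub_one_mul]
  push_cast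
  ring

theorem card_fixed_partitions_mod_general (p m : ℕ) (hp : p.Prime) :
    {P : Set (Set (ZMod (p ^ m))) | Setoid.IsPartition P ∧
        ∀ y : ZMod (p ^ m), ∀ A ∈ P, (fun x => x + y) '' A ∈ P}.ncard ≡ bell (p ^ m) [MOD p] := by
  have := Fact.mk hp
  change (translationInvariantPartitions (ZMod (p ^ m))).ncard ≡ _ [MOD p]
  rw [ncard_translationInvariantPartitions, card_addSubgroup_zmod_prime_pow]
  exact (bell_prime_pow_modEq hp m).symm

theorem card_fixed_partitions_mod (p m : ℕ) (hp : p.Prime) (hm : 0 < m) :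
    {P : Set (Set (ZMod (p ^ m))) | Setoid.IsPartition P ∧
        ∀ y : ZMod (p ^ m), ∀ A ∈ P, (fun x => x + y) '' A ∈ P}.ncard ≡ bell (p ^ m) [MOD p] :=
  card_fixed_partitions_mod_general p m hp
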